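/- arXiv:2209.08542 — 4 statements merged into one kernel-verified Lean document; each statement's English description precedes it below -/
import Mathlib

section
/- Let Φ : [0,∞) → [0,∞) be nondecreasing with Φ(0) = 0, and suppose there exists a real number n ≥ 1 such that Φ^{(n)}(t) := Φ(t^n) is convex on [0,∞). Let 0 < r, p, q < ∞ satisfy 1/r = 1/p + 1/q. Then for all a, b ≥ 0: Φ((a·b)^r) ≤ (r/p)·Φ(a^p) + (r/q)·Φ(b^q). -/
/-- Let `Φ : [0,∞) → [0,∞)` be nondecreasing with `Φ(0) = 0`, and suppose
there is a real `n ≥ 1` such that `t ↦ Φ(tⁿ)` is convex on `[0,∞)`.  If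
`0 < r, p, q < ∞` satisfy `1/r = 1/p + 1/q`, then for all `a, b ≥ 0`,
`Φ((a·b)^r) ≤ (r/p)·Φ(a^p) + (r/q)·Φ(b^q)`. -/
theorem stmt_8 (Φ : ℝ → ℝ)
    (hmono : MonotoneOn Φ (Set.Ici 0))
    (hnn : ∀ t : ℝ, 0 ≤ t → 0 ≤ Φ t)
    (h0 : Φ 0 = 0)
    (hconv : ∃ n : ℝ, 1 ≤ n ∧ ConvexOn ℝ (Set.Ici 0) (fun t : ℝ => Φ (t ^ n)))
    (r p q : ℝ) (hr : 0 < r) (hp : 0 < p) (hq : 0 < q)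
    (hrpq : 1 / r = 1 / p + 1 / q) :
    ∀ a b : ℝ, 0 ≤ a → 0 ≤ b →
      Φ ((a * b) ^ r) ≤ (r / p) * Φ (a ^ p) + (r / q) * Φ (b ^ q) := by
  obtain ⟨n, hn1, hcv⟩ := hconv
  have hn : 0 < n := lt_of_lt_of_le one_pos hn1
  intro a b ha hb
  have hw1 : (0:ℝ) ≤ r / p := by positivity
  have hw2 : (0:ℝ) ≤ r / q := by positivity
  have hsum : r / p + r / q = 1 := by
    field_simp at hrpq ⊢
    linarith [hrpq]
  set x := a ^ (p / n) with hx
  set y := b ^ (q / n) with hy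
  have hx0 : 0 ≤ x := Real.rpow_nonneg ha _
  have hy0 : 0 ≤ y := Real.rpow_nonneg hb _
  -- AM-GM
  have hgm : x ^ (r / p) * y ^ (r / q) ≤ r / p * x + r / q * y :=
    Real.geom_mean_le_arith_mean2_weighted hw1 hw2 hx0 hy0 hsum
  have hxr : x ^ (r / p) = a ^ (r / n) := by
    rw [hx, ← Real.rpow_mul ha]
    congr 1
    field_simp
  have hyr : y ^ (r / q) = b ^ (r / n) := by
    rw [hy, ← Real.rpow_mul hb]
    congr 1
    field_simp
  have habr : (a * b) ^ (r / n) ≤ r / p * x + r / q * y := by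
    rw [Real.mul_rpow ha hb, ← hxr, ← hyr]; exact hgm
  have hz0 : 0 ≤ r / p * x + r / q * y := by positivity
  -- monotonicity step
  have hmono' : Φ ((a * b) ^ r) ≤ Φ ((r / p * x + r / q * y) ^ n) := by
    have h1 : ((a * b) ^ (r / n)) ^ n = (a * b) ^ r := by
      rw [← Real.rpow_mul (mul_nonneg ha hb)]
      congr 1
      field_simp
    ring
    rw [← h1]
    apply hmono (Set.mem_Ici.2 (Real.rpow_nonneg (Real.rpow_nonneg (mul_nonneg ha hb) _) _))
      (Set.mem_Ici.2 (Real.rpow_nonneg hz0 _))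
    exact Real.rpow_le_rpow (Real.rpow_nonneg (mul_nonneg ha hb) _) habr (le_of_lt hn)
  -- convexity step
  have hcvx := hcv.2 (Set.mem_Ici.2 hx0) (Set.mem_Ici.2 hy0) hw1 hw2 hsum
  simp only at hcvx
  have hxn : x ^ n = a ^ p := by
    rw [hx, ← Real.rpow_mul ha]
    congr 1
    field_simp
  have hyn : y ^ n = b ^ q := by
    rw [hy, ← Real.rpow_mul hb]
    congr 1
    field_simp
  calc Φ ((a * b) ^ r) ≤ Φ ((r / p * x + r / q * y) ^ n) := hmono'
    _ ≤ r / p * Φ (x ^ n) + r / q * Φ (y ^ n) := hcvx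
    _ = r / p * Φ (a ^ p) + r / q * Φ (b ^ q) := by rw [hxn, hyn]
end

section
/- Let Φ, Ψ : [0,∞) → [0,∞) be continuous strictly increasing bijections such that t ≤ Φ^{-1}(t)·Ψ^{-1}(t) ≤ 2t for all t > 0. Define φ̃_Φ(t) := t·Ψ^{-1}(1/t) for t > 0, its generalized inverse φ̃_Φ^{-1}(u) := sup{s > 0 : φ̃_Φ(s) ≤ u}, and Φ̃(t) := 1/φ̃_Φ^{-1}(1/t) for t > 0 with Φ̃(0) := 0. Then Φ(t) ≤ Φ̃(t) ≤ Φ(2t) for all t > 0. -/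
/-- Let `Φ, Ψ` be continuous strictly increasing bijections of `[0,∞)`
onto itself (with inverses `Φinv, Ψinv`) such that `t ≤ Φ⁻¹(t)·Ψ⁻¹(t) ≤ 2t` for all
`t > 0`.  Define `φ̃_Φ(s) = s·Ψ⁻¹(1/s)`, its generalized inverse
`φ̃_Φ⁻¹(u) = sup {s > 0 : φ̃_Φ(s) ≤ u}`, and `Φ̃(t) = 1/φ̃_Φ⁻¹(1/t)` for `t > 0`.
Then `Φ(t) ≤ Φ̃(t) ≤ Φ(2t)` for all `t > 0`. -/
theorem stmt_12 (Φ Ψ Φinv Ψinv : ℝ → ℝ)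
    (hΦcont : ContinuousOn Φ (Set.Ici 0))
    (hΦmono : StrictMonoOn Φ (Set.Ici 0))
    (hΦmaps : Set.MapsTo Φ (Set.Ici 0) (Set.Ici 0))
    (hΦinvmaps : Set.MapsTo Φinv (Set.Ici 0) (Set.Ici 0))
    (hΦleft : ∀ t : ℝ, 0 ≤ t → Φinv (Φ t) = t)
    (hΦright : ∀ t : ℝ, 0 ≤ t → Φ (Φinv t) = t)
    (hΨcont : ContinuousOn Ψ (Set.Ici 0))
    (hΨmono : StrictMonoOn Ψ (Set.Ici 0))
    (hΨmaps : Set.MapsTo Ψ (Set.Ici 0) (Set.Ici 0))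
    (hΨinvmaps : Set.MapsTo Ψinv (Set.Ici 0) (Set.Ici 0))
    (hΨleft : ∀ t : ℝ, 0 ≤ t → Ψinv (Ψ t) = t)
    (hΨright : ∀ t : ℝ, 0 ≤ t → Ψ (Ψinv t) = t)
    (hcomp : ∀ t : ℝ, 0 < t → t ≤ Φinv t * Ψinv t ∧ Φinv t * Ψinv t ≤ 2 * t) :
    ∀ t : ℝ, 0 < t →
      Φ t ≤ 1 / sSup {s : ℝ | 0 < s ∧ s * Ψinv (1 / s) ≤ 1 / t} ∧
      1 / sSup {s : ℝ | 0 < s ∧ s * Ψinv (1 / s) ≤ 1 / t} ≤ Φ (2 * t) := by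
  -- Φ 0 = 0
  have hΦ0 : Φ 0 = 0 := by
    have h1 : Φ (Φinv 0) = 0 := hΦright 0 le_rfl
    have h2 : (0:ℝ) ≤ Φinv 0 := hΦinvmaps (by simp [Set.mem_Ici])
    have h3 : (0:ℝ) ≤ Φ 0 := hΦmaps (by simp [Set.mem_Ici])
    rcases eq_or_lt_of_le h2 with h | h
    · rw [← h] at h1; exact h1
    · have := hΦmono (Set.self_mem_Ici) (Set.mem_Ici.2 h2) h
      linarith
  intro t ht
  set S : Set ℝ := {s : ℝ | 0 < s ∧ s * Ψinv (1 / s) ≤ 1 / t} with hS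
  have hΦt : 0 < Φ t := by
    have := hΦmono Set.self_mem_Ici (Set.mem_Ici.2 ht.le) ht
    linarith [hΦ0]
  have hΦ2t : 0 < Φ (2 * t) := by
    have := hΦmono Set.self_mem_Ici (Set.mem_Ici.2 (by linarith : (0:ℝ) ≤ 2*t)) (by linarith)
    linarith [hΦ0]
  -- s₀ = 1/Φ(2t) belongs to S
  have hs₀mem : (1 / Φ (2 * t)) ∈ S := by
    constructor
    · positivity
    · have hinv : (1 : ℝ) / (1 / Φ (2 * t)) = Φ (2 * t) := one_div_one_div _
      rw [hinv]
      have hc := (hcomp (Φ (2 * t)) hΦ2t).2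
      rw [hΦleft (2 * t) (by linarith)] at hc
      -- hc : 2 * t * Ψinv (Φ (2*t)) ≤ 2 * Φ (2*t)
      have hΨnn : 0 ≤ Ψinv (Φ (2 * t)) := hΨinvmaps (Set.mem_Ici.2 hΦ2t.le)
      rw [div_mul_eq_mul_div, div_le_div_iff₀ hΦ2t ht]
      nlinarith
  -- every element of S is ≤ 1/Φ t
  have hub : ∀ s ∈ S, s ≤ 1 / Φ t := by
    rintro s ⟨hs, hφ⟩
    have hsinv : 0 < 1 / s := by positivity
    have hc := (hcomp (1 / s) hsinv).1
    have hΦinn : 0 ≤ Φinv (1 / s) := hΦinvmaps (Set.mem_Ici.2 hsinv.le)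
    have hΨnn : 0 ≤ Ψinv (1 / s) := hΨinvmaps (Set.mem_Ici.2 hsinv.le)
    -- from hφ : s * Ψinv (1/s) ≤ 1/t  get  Ψinv(1/s) ≤ 1/(s*t)
    have ht' : t ≤ Φinv (1 / s) := by
      have e1 : s * (1 / s) = 1 := by field_simp
      have e2 : t * (1 / t) = 1 := by field_simp
      nlinarith [mul_le_mul_of_nonneg_left hc (mul_nonneg hs.le ht.le),
        mul_le_mul_of_nonneg_left hφ (mul_nonneg hΦinn ht.le), e1, e2,
        mul_pos hs ht]
    have hmono : Φ t ≤ Φ (Φinv (1 / s)) :=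
      (hΦmono.monotoneOn) (Set.mem_Ici.2 ht.le) (Set.mem_Ici.2 (le_trans ht.le ht')) ht'
    rw [hΦright (1 / s) hsinv.le] at hmono
    rw [le_div_iff₀ hΦt]
    calc s * Φ t ≤ s * (1 / s) := by nlinarith
      _ = 1 := by field_simp
  have hbdd : BddAbove S := ⟨1 / Φ t, hub⟩
  have hne : S.Nonempty := ⟨_, hs₀mem⟩
  have hsup_ge : 1 / Φ (2 * t) ≤ sSup S := le_csSup hbdd hs₀mem
  have hsup_le : sSup S ≤ 1 / Φ t := csSup_le hne hub
  have hsup_pos : 0 < sSup S := lt_of_lt_of_le (by positivity) hsup_ge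
  constructor
  · rw [le_div_iff₀ hsup_pos]
    calc Φ t * sSup S ≤ Φ t * (1 / Φ t) := by nlinarith
      _ = 1 := by field_simp
  · rw [div_le_iff₀ hsup_pos]
    have := mul_le_mul_of_nonneg_left hsup_ge hΦ2t.le
    calc (1:ℝ) = Φ (2 * t) * (1 / Φ (2 * t)) := by field_simp
      _ ≤ Φ (2 * t) * sSup S := this
end

section
/- Let Φ be a growth function with Φ(t) > 0 for all t > 0, differentiable on (0,∞), and assume 1 < a_Φ ≤ b_Φ < ∞. Then there exists a constant C > 0 such that for every nonincreasing locally integrable function μ : (0,∞) → [0,∞): sup_{t>0} t·Φ((1/t)·∫₀^t μ(s) ds) ≤ C · sup_{t>0} t·Φ(μ(t)). -/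
open scoped ENNReal

lemma aux_rpow_lower (Φ : ℝ → ℝ) (a : ℝ)
    (hpos : ∀ t : ℝ, 0 < t → 0 < Φ t)
    (hdiff : ∀ t : ℝ, 0 < t → DifferentiableAt ℝ Φ t)
    (hlow : ∀ t : ℝ, 0 < t → a * Φ t ≤ t * deriv Φ t) :
    ∀ s t : ℝ, 0 < s → s ≤ t → (t / s) ^ a * Φ s ≤ Φ t := by
  have hmg : MonotoneOn (fun t => Φ t * t ^ (-a)) (Set.Ioi (0:ℝ)) := by
    apply monotoneOn_of_hasDerivWithinAt_nonneg (f' := fun x =>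
        deriv Φ x * x ^ (-a) + Φ x * (-a * x ^ (-a - 1))) (convex_Ioi 0)
    · intro x hx
      exact ((hdiff x hx).mul ((Real.differentiableAt_rpow_const_of_ne (-a)
        (ne_of_gt hx)))).continuousAt.continuousWithinAt
    · intro x hx
      rw [interior_Ioi] at hx
      exact (((hdiff x hx).hasDerivAt.mul
        (Real.hasDerivAt_rpow_const (Or.inl (ne_of_gt hx)))).hasDerivWithinAt)
    · intro x hx
      rw [interior_Ioi] at hx
      have hx' : (0:ℝ) < x := hx
      have h1 : x ^ (-a) = x * x ^ (-a - 1) := by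
        rw [show x * x ^ (-a-1) = x^(1:ℝ) * x^(-a-1) by rw [Real.rpow_one],
          ← Real.rpow_add hx']
        norm_num
      have h2 : (0:ℝ) < x ^ (-a - 1) := Real.rpow_pos_of_pos hx' _
      have h3 := hlow x hx'
      rw [h1]
      nlinarith [h2, h3]
  intro s t hs hst
  have ht : (0:ℝ) < t := lt_of_lt_of_le hs hst
  have key := hmg (Set.mem_Ioi.2 hs) (Set.mem_Ioi.2 ht) hst
  simp only at key
  have hta : (0:ℝ) < t ^ a := Real.rpow_pos_of_pos ht _
  have hsa : (0:ℝ) < s ^ a := Real.rpow_pos_of_pos hs _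
  have hts : (t/s)^a = t^a / s^a := Real.div_rpow ht.le hs.le a
  have hne : t ^ (-a) = (t^a)⁻¹ := Real.rpow_neg ht.le a
  have hne' : s ^ (-a) = (s^a)⁻¹ := Real.rpow_neg hs.le a
  rw [hts]
  rw [hne, hne'] at key
  have hΦs := hpos s hs
  calc t^a/s^a * Φ s = (Φ s * (s^a)⁻¹) * t^a := by field_simp
    _ ≤ (Φ t * (t^a)⁻¹) * t^a := by
        apply mul_le_mul_of_nonneg_right key hta.le
    _ = Φ t := by field_simp

lemma aux_rpow_upper (Φ : ℝ → ℝ) (b : ℝ)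
    (hdiff : ∀ t : ℝ, 0 < t → DifferentiableAt ℝ Φ t)
    (hup : ∀ t : ℝ, 0 < t → t * deriv Φ t ≤ b * Φ t) :
    ∀ s t : ℝ, 0 < s → s ≤ t → Φ t ≤ (t / s) ^ b * Φ s := by
  have hmg : AntitoneOn (fun t => Φ t * t ^ (-b)) (Set.Ioi (0:ℝ)) := by
    apply antitoneOn_of_hasDerivWithinAt_nonpos (f' := fun x =>
        deriv Φ x * x ^ (-b) + Φ x * (-b * x ^ (-b - 1))) (convex_Ioi 0)
    · intro x hx
      exact ((hdiff x hx).mul ((Real.differentiableAt_rpow_const_of_ne (-b)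
        (ne_of_gt hx)))).continuousAt.continuousWithinAt
    · intro x hx
      rw [interior_Ioi] at hx
      exact (((hdiff x hx).hasDerivAt.mul
        (Real.hasDerivAt_rpow_const (Or.inl (ne_of_gt hx)))).hasDerivWithinAt)
    · intro x hx
      rw [interior_Ioi] at hx
      have hx' : (0:ℝ) < x := hx
      have h1 : x ^ (-b) = x * x ^ (-b - 1) := by
        rw [show x * x ^ (-b-1) = x^(1:ℝ) * x^(-b-1) by rw [Real.rpow_one],
          ← Real.rpow_add hx']
        norm_num
      have h2 : (0:ℝ) < x ^ (-b - 1) := Real.rpow_pos_of_pos hx' _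
      have h3 := hup x hx'
      rw [h1]
      nlinarith [h2, h3]
  intro s t hs hst
  have ht : (0:ℝ) < t := lt_of_lt_of_le hs hst
  have key := hmg (Set.mem_Ioi.2 hs) (Set.mem_Ioi.2 ht) hst
  simp only at key
  have htb : (0:ℝ) < t ^ b := Real.rpow_pos_of_pos ht _
  have hsb : (0:ℝ) < s ^ b := Real.rpow_pos_of_pos hs _
  have hts : (t/s)^b = t^b / s^b := Real.div_rpow ht.le hs.le b
  have hne : t ^ (-b) = (t^b)⁻¹ := Real.rpow_neg ht.le b
  have hne' : s ^ (-b) = (s^b)⁻¹ := Real.rpow_neg hs.le b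
  rw [hts]
  rw [hne, hne'] at key
  calc Φ t = (Φ t * (t^b)⁻¹) * t^b := by field_simp
    _ ≤ (Φ s * (s^b)⁻¹) * t^b := mul_le_mul_of_nonneg_right key htb.le
    _ = t^b/s^b * Φ s := by field_simp

/-- Let `Φ` be a growth function (continuous, nondecreasing, mapping
`[0,∞)` onto itself), positive and differentiable on `(0,∞)`, with
`1 < a_Φ ≤ b_Φ < ∞`.  Then there is `C > 0` such that for every nonincreasing locally
integrable `μ : (0,∞) → [0,∞)`,
`sup_{t>0} t·Φ((1/t)·∫₀ᵗ μ) ≤ C · sup_{t>0} t·Φ(μ(t))` (suprema in `[0,∞]`). -/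
theorem stmt_15 (Φ : ℝ → ℝ)
    (hcont : ContinuousOn Φ (Set.Ici 0))
    (hmono : MonotoneOn Φ (Set.Ici 0))
    (hmaps : Set.MapsTo Φ (Set.Ici 0) (Set.Ici 0))
    (hsurj : Set.SurjOn Φ (Set.Ici 0) (Set.Ici 0))
    (hpos : ∀ t : ℝ, 0 < t → 0 < Φ t)
    (hdiff : ∀ t : ℝ, 0 < t → DifferentiableAt ℝ Φ t)
    (ha : 1 < sInf {x : ℝ | ∃ t : ℝ, 0 < t ∧ x = t * deriv Φ t / Φ t})
    (hb : BddAbove {x : ℝ | ∃ t : ℝ, 0 < t ∧ x = t * deriv Φ t / Φ t}) :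
    ∃ C : ℝ, 0 < C ∧ ∀ μ : ℝ → ℝ,
      (∀ s : ℝ, 0 < s → 0 ≤ μ s) →
      AntitoneOn μ (Set.Ioi 0) →
      (∀ t : ℝ, 0 < t → IntervalIntegrable μ MeasureTheory.volume 0 t) →
      (⨆ t : {t : ℝ // 0 < t},
          ENNReal.ofReal ((t : ℝ) * Φ ((1 / (t : ℝ)) * ∫ s in (0:ℝ)..(t : ℝ), μ s)))
        ≤ ENNReal.ofReal C *
          ⨆ t : {t : ℝ // 0 < t}, ENNReal.ofReal ((t : ℝ) * Φ (μ (t : ℝ))) := by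
  classical
  set S : Set ℝ := {x : ℝ | ∃ t : ℝ, 0 < t ∧ x = t * deriv Φ t / Φ t} with hS
  set a : ℝ := sInf S with haDef
  set b : ℝ := sSup S with hbDef
  have hbdd : BddBelow S := by
    by_contra h
    have h0 : a = 0 := Real.sInf_of_not_bddBelow h
    have : (1:ℝ) < a := ha
    rw [h0] at this
    norm_num at this
  have ha1 : 1 < a := ha
  have ha0 : 0 < a := lt_trans one_pos ha1
  have hlow : ∀ t : ℝ, 0 < t → a * Φ t ≤ t * deriv Φ t := by
    intro t ht
    have hmem : t * deriv Φ t / Φ t ∈ S := ⟨t, ht, rfl⟩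
    have := csInf_le hbdd hmem
    have hΦ := hpos t ht
    rw [le_div_iff₀ hΦ] at this
    linarith
  have hup : ∀ t : ℝ, 0 < t → t * deriv Φ t ≤ b * Φ t := by
    intro t ht
    have hmem : t * deriv Φ t / Φ t ∈ S := ⟨t, ht, rfl⟩
    have := le_csSup hb hmem
    have hΦ := hpos t ht
    rw [div_le_iff₀ hΦ] at this
    linarith
  have hab : a ≤ b := by
    have hmem : 1 * deriv Φ 1 / Φ 1 ∈ S := ⟨1, one_pos, rfl⟩
    exact le_trans (csInf_le hbdd hmem) (le_csSup hb hmem)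
  have hb0 : 0 < b := lt_of_lt_of_le ha0 hab
  have hA := aux_rpow_lower Φ a hpos hdiff hlow
  have hB := aux_rpow_upper Φ b hdiff hup
  -- Φ 0 = 0
  have hΦ0 : Φ 0 = 0 := by
    obtain ⟨s, hs, hΦs⟩ := hsurj (Set.self_mem_Ici : (0:ℝ) ∈ Set.Ici 0)
    have h1 : Φ 0 ≤ Φ s := hmono Set.self_mem_Ici hs hs
    have h2 : (0:ℝ) ≤ Φ 0 := hmaps Set.self_mem_Ici
    rw [hΦs] at h1
    linarith
  -- strict monotonicity
  have hstrict : StrictMonoOn Φ (Set.Ici 0) := by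
    intro x hx y hy hxy
    rcases eq_or_lt_of_le (Set.mem_Ici.1 hx) with hx0 | hx0
    · rw [← hx0, hΦ0]
      exact hpos y (by rw [← hx0] at hxy; exact hxy)
    · have h1 : 1 < (y/x)^a := by
        refine (Real.one_lt_rpow_iff_of_pos (div_pos (lt_trans hx0 hxy) hx0)).2 (Or.inl ⟨?_, ha0⟩)
        rw [lt_div_iff₀ hx0]
        linarith
      have := hA x y hx0 hxy.le
      nlinarith [hpos x hx0]
  have hle_on : ∀ x y : ℝ, 0 ≤ x → 0 ≤ y → Φ x ≤ Φ y → x ≤ y := by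
    intro x y hx hy h
    by_contra hlt
    push_neg at hlt
    exact absurd h (not_le.2 (hstrict hy hx hlt))
  -- inverse function
  set ψ : ℝ → ℝ := Function.invFunOn Φ (Set.Ici 0) with hψDef
  have hψ : ∀ y : ℝ, 0 ≤ y → 0 ≤ ψ y ∧ Φ (ψ y) = y := by
    intro y hy
    obtain ⟨x, hx, hxy⟩ := hsurj (Set.mem_Ici.2 hy)
    exact ⟨Function.invFunOn_mem ⟨x, hx, hxy⟩, Function.invFunOn_eq ⟨x, hx, hxy⟩⟩
  have hψmul : ∀ u l : ℝ, 0 ≤ u → 1 ≤ l → ψ (l * u) ≤ l ^ (1/a) * ψ u := by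
    intro u l hu hl
    obtain ⟨hu0, huΦ⟩ := hψ u hu
    have hlu : 0 ≤ l * u := mul_nonneg (le_trans zero_le_one hl) hu
    obtain ⟨hlu0, hluΦ⟩ := hψ (l * u) hlu
    have hl0 : (0:ℝ) < l := lt_of_lt_of_le one_pos hl
    have hl1a : (1:ℝ) ≤ l ^ (1/a) := by
      have := Real.rpow_le_rpow (by norm_num : (0:ℝ) ≤ 1) hl (by positivity : (0:ℝ) ≤ 1/a)
      rwa [Real.one_rpow] at this
    rcases eq_or_lt_of_le hu0 with hx0 | hx0
    · -- ψ u = 0, so u = 0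
      have hu' : u = 0 := by rw [← huΦ, ← hx0, hΦ0]
      have : ψ (l * u) ≤ 0 := by
        by_contra hc
        push_neg at hc
        have := hpos _ hc
        rw [hluΦ, hu'] at this
        simp at this
      calc ψ (l*u) ≤ 0 := this
        _ ≤ l ^ (1/a) * ψ u := by rw [← hx0]; simp
    · -- ψ u > 0
      set x := ψ u
      have hxle : x ≤ l ^ (1/a) * x := le_mul_of_one_le_left hx0.le hl1a
      have hkey := hA x (l ^ (1/a) * x) hx0 hxle
      have hq : (l ^ (1/a) * x) / x = l ^ (1/a) := by field_simp
      rw [hq] at hkey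
      have hpow : (l ^ (1/a)) ^ a = l := by
        rw [← Real.rpow_mul hl0.le, one_div, inv_mul_cancel₀ (ne_of_gt ha0), Real.rpow_one]
      rw [hpow, huΦ] at hkey
      apply hle_on _ _ hlu0 (by positivity)
      rw [hluΦ]
      exact hkey
  set c : ℝ := a / (a - 1) with hcDef
  have hc0 : 0 < c := div_pos ha0 (by linarith)
  have hc1 : 1 ≤ c := by
    rw [hcDef, le_div_iff₀ (by linarith : (0:ℝ) < a - 1)]
    linarith
  refine ⟨c ^ b, Real.rpow_pos_of_pos hc0 b, ?_⟩
  intro μ hμ0 hμanti hμint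
  set M := ⨆ t : {t : ℝ // 0 < t}, ENNReal.ofReal ((t : ℝ) * Φ (μ (t : ℝ))) with hMdef
  by_cases hMtop : M = ⊤
  · rw [hMtop, ENNReal.mul_top (ne_of_gt (ENNReal.ofReal_pos.2 (Real.rpow_pos_of_pos hc0 b)))]
    exact le_top
  set M' : ℝ := M.toReal with hM'def
  have hM'0 : 0 ≤ M' := ENNReal.toReal_nonneg
  have hMle : ∀ t : ℝ, 0 < t → t * Φ (μ t) ≤ M' := by
    intro t ht
    have h1 : ENNReal.ofReal (t * Φ (μ t)) ≤ M := by
      rw [hMdef]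
      exact le_iSup (fun (u : {t : ℝ // 0 < t}) => ENNReal.ofReal ((u : ℝ) * Φ (μ (u : ℝ)))) ⟨t, ht⟩
    exact (ENNReal.ofReal_le_iff_le_toReal hMtop).1 h1
  have key : ∀ t : ℝ, 0 < t →
      t * Φ ((1 / t) * ∫ s in (0:ℝ)..t, μ s) ≤ c ^ b * M' := by
    intro t ht
    by_cases hM0 : M' = 0
    · have hμz : ∀ s : ℝ, 0 < s → μ s = 0 := by
        intro s hs
        have h1 := hMle s hs
        rw [hM0] at h1
        have h2 : (0:ℝ) ≤ Φ (μ s) := hmaps (Set.mem_Ici.2 (hμ0 s hs))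
        have h3 : Φ (μ s) = 0 := by nlinarith
        by_contra hc'
        have h4 : 0 < μ s := lt_of_le_of_ne (hμ0 s hs) (Ne.symm hc')
        exact absurd h3 (ne_of_gt (hpos _ h4))
      have hint : ∫ s in (0:ℝ)..t, μ s = 0 := by
        have h5 : ∫ s in (0:ℝ)..t, μ s = ∫ s in (0:ℝ)..t, (0:ℝ) := by
          apply intervalIntegral.integral_congr_ae
          filter_upwards with s hs
          rw [Set.uIoc_of_le ht.le] at hs
          exact hμz s hs.1
        rw [h5, intervalIntegral.integral_zero]
      rw [hint, mul_zero, hΦ0, mul_zero, hM0, mul_zero]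
    · have hM0' : 0 < M' := lt_of_le_of_ne hM'0 (Ne.symm hM0)
      obtain ⟨hK0, hKΦ⟩ := hψ (M' / t) (by positivity)
      set K : ℝ := ψ (M' / t) with hKdef
      have hKpos : 0 < K := by
        rcases eq_or_lt_of_le hK0 with h | h
        · exfalso
          rw [← h, hΦ0] at hKΦ
          have : (0:ℝ) < M' / t := by positivity
          rw [← hKΦ] at this
          exact lt_irrefl 0 this
        · exact h
      have hμle : ∀ s : ℝ, 0 < s → s ≤ t → μ s ≤ t ^ (1/a) * K * s ^ (-(1/a)) := by
        intro s hs hst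
        have h1 : Φ (μ s) ≤ M' / s := by
          rw [le_div_iff₀ hs]
          have := hMle s hs
          linarith [this]
        have h2 : μ s ≤ ψ (M' / s) := by
          obtain ⟨h3, h4⟩ := hψ (M' / s) (by positivity)
          apply hle_on _ _ (hμ0 s hs) h3
          rw [h4]
          exact h1
        have h5 : M' / s = (t / s) * (M' / t) := by
          field_simp
        have h6 : ψ (M' / s) ≤ (t / s) ^ (1/a) * K := by
          rw [h5]
          exact hψmul (M' / t) (t / s) (by positivity) ((one_le_div hs).2 hst)
        have h7 : (t / s) ^ (1/a) = t ^ (1/a) * s ^ (-(1/a)) := by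
          rw [Real.div_rpow ht.le hs.le, Real.rpow_neg hs.le, div_eq_mul_inv]
        rw [h7] at h6
        calc μ s ≤ ψ (M' / s) := h2
          _ ≤ t ^ (1/a) * s ^ (-(1/a)) * K := h6
          _ = t ^ (1/a) * K * s ^ (-(1/a)) := by ring
      have h1a1 : (1:ℝ)/a < 1 := (div_lt_one ha0).2 ha1
      have hrr : (-1:ℝ) < -(1/a) := by linarith
      have hgint : IntervalIntegrable (fun s : ℝ => t ^ (1/a) * K * s ^ (-(1/a)))
          MeasureTheory.volume 0 t :=
        (intervalIntegral.intervalIntegrable_rpow' hrr).const_mul _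
      have hae0 : ∀ᵐ x : ℝ ∂MeasureTheory.volume, x ≠ 0 := by
        rw [MeasureTheory.ae_iff]
        have : {x : ℝ | ¬x ≠ 0} = {0} := by ext x; simp
        rw [this]
        exact Real.volume_singleton
      have hint_le : (∫ s in (0:ℝ)..t, μ s) ≤
          ∫ s in (0:ℝ)..t, t ^ (1/a) * K * s ^ (-(1/a)) := by
        apply intervalIntegral.integral_mono_ae_restrict ht.le (hμint t ht) hgint
        filter_upwards [MeasureTheory.ae_restrict_mem measurableSet_Icc,
          MeasureTheory.ae_restrict_of_ae hae0] with x hx hx0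
        exact hμle x (lt_of_le_of_ne hx.1 (Ne.symm hx0)) hx.2
      have hval : (∫ s in (0:ℝ)..t, t ^ (1/a) * K * s ^ (-(1/a)))
          = t ^ (1/a) * K * (t ^ (1 - 1/a) / (1 - 1/a)) := by
        rw [intervalIntegral.integral_const_mul, integral_rpow (Or.inl hrr)]
        rw [Real.zero_rpow (by linarith : -(1/a) + 1 ≠ 0)]
        rw [show -(1/a) + 1 = 1 - 1/a by ring, sub_zero]
      have hval2 : t ^ ((1:ℝ)/a) * t ^ (1 - 1/a) = t := by
        rw [← Real.rpow_add ht]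
        norm_num
      have hint2 : (∫ s in (0:ℝ)..t, μ s) ≤ c * t * K := by
        rw [hval] at hint_le
        have he : t ^ (1/a) * K * (t ^ (1 - 1/a) / (1 - 1/a)) = c * t * K := by
          have h9 : t ^ (1/a) * K * (t ^ (1 - 1/a) / (1 - 1/a))
              = (t ^ ((1:ℝ)/a) * t ^ (1 - 1/a)) * K / (1 - 1/a) := by ring
          rw [h9, hval2, hcDef]
          have hane : a ≠ 0 := ne_of_gt ha0
          have h1a0 : (1:ℝ) - 1/a ≠ 0 := by
            intro hcc
            have : (1:ℝ)/a = 1 := by linarith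
            linarith
          have ha1ne : a - 1 ≠ 0 := by intro hcc; linarith [ha1]
          field_simp
        rw [he] at hint_le
        exact hint_le
      have hintnn : 0 ≤ ∫ s in (0:ℝ)..t, μ s := by
        apply intervalIntegral.integral_nonneg_of_ae_restrict ht.le
        filter_upwards [MeasureTheory.ae_restrict_mem measurableSet_Icc,
          MeasureTheory.ae_restrict_of_ae hae0] with x hx hx0
        exact hμ0 x (lt_of_le_of_ne hx.1 (Ne.symm hx0))
      have hAv : (1 / t) * ∫ s in (0:ℝ)..t, μ s ≤ c * K := by
        rw [div_mul_eq_mul_div, one_mul, div_le_iff₀ ht]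
        nlinarith [hint2]
      have hAv0 : 0 ≤ (1 / t) * ∫ s in (0:ℝ)..t, μ s := by positivity
      have hΦAv : Φ ((1 / t) * ∫ s in (0:ℝ)..t, μ s) ≤ Φ (c * K) :=
        hmono (Set.mem_Ici.2 hAv0) (Set.mem_Ici.2 (by positivity)) hAv
      have hlast : Φ (c * K) ≤ c ^ b * Φ K := by
        have h8 := hB K (c * K) hKpos (le_mul_of_one_le_left hKpos.le hc1)
        rw [show c * K / K = c by field_simp] at h8
        exact h8
      rw [hKΦ] at hlast
      calc t * Φ ((1 / t) * ∫ s in (0:ℝ)..t, μ s)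
          ≤ t * (c ^ b * (M' / t)) :=
            mul_le_mul_of_nonneg_left (hΦAv.trans hlast) ht.le
        _ = c ^ b * M' := by field_simp
  calc (⨆ t : {t : ℝ // 0 < t},
        ENNReal.ofReal ((t : ℝ) * Φ ((1 / (t : ℝ)) * ∫ s in (0:ℝ)..(t : ℝ), μ s)))
      ≤ ENNReal.ofReal (c ^ b * M') := by
        apply iSup_le
        intro u
        exact ENNReal.ofReal_le_ofReal (key u u.2)
    _ = ENNReal.ofReal (c ^ b) * ENNReal.ofReal M' :=
        ENNReal.ofReal_mul (Real.rpow_pos_of_pos hc0 b).le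
    _ = ENNReal.ofReal (c ^ b) * M := by rw [hM'def, ENNReal.ofReal_toReal hMtop]
end

section
/- Let Φ be a growth function with Φ(t) > 0 for all t > 0, differentiable on (0,∞), strictly increasing, and assume 1 < a_Φ ≤ b_Φ < ∞. Then there exists a constant C' > 0 such that for every nonincreasing locally integrable function μ : (0,∞) → [0,∞): sup_{t>0} φ_Φ(t)·(1/t)·∫₀^t μ(s) ds ≤ C' · sup_{t>0} φ_Φ(t)·μ(t), where φ_Φ(t) := 1/Φ^{-1}(1/t) for t > 0. -/
open scoped ENNReal
open Set

/-!
Since `t Φ'(t)/Φ(t) ≥ a > 1`, the quotient `Φ(r)/r^a` is nondecreasing, so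
`Φ(l x) ≥ l^a Φ(x)` for `l ≥ 1`; inverting, `Φ⁻¹(u) ≤ (u/v)^{1/a} Φ⁻¹(v)` for `v ≤ u`.
With `M = sup φ_Φ μ` this gives `μ(s) ≤ M Φ⁻¹(1/s) ≤ M t^{1/a} Φ⁻¹(1/t) s^{-1/a}` for
`s ≤ t`, and since `1/a < 1` the right-hand side is integrable at `0`: integrating yields
`φ_Φ(t) · (1/t) ∫₀ᵗ μ ≤ M / (1 - 1/a)`.
-/

def IsLowerType (Φ : ℝ → ℝ) (a : ℝ) : Prop :=
  ∀ x, 0 < x → ∀ l, 1 ≤ l → l ^ a * Φ x ≤ Φ (l * x)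

def IsUpperType (ψ : ℝ → ℝ) (p : ℝ) : Prop :=
  ∀ u v, 0 < v → v ≤ u → ψ u ≤ (u / v) ^ p * ψ v

theorem monotoneOn_div_rpow_of_mul_le_mul_deriv {Φ : ℝ → ℝ} {a : ℝ}
    (hdiff : ∀ r, 0 < r → DifferentiableAt ℝ Φ r)
    (hlow : ∀ r, 0 < r → a * Φ r ≤ r * deriv Φ r) :
    MonotoneOn (fun r => Φ r / r ^ a) (Ioi 0) := by
  have hderiv : ∀ r, 0 < r → HasDerivAt (fun r => Φ r / r ^ a)
      ((deriv Φ r * r ^ a - Φ r * (a * r ^ (a - 1))) / (r ^ a) ^ 2) r := fun r hr =>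
    (hdiff r hr).hasDerivAt.div (Real.hasDerivAt_rpow_const (Or.inl hr.ne'))
      (Real.rpow_pos_of_pos hr a).ne'
  refine monotoneOn_of_hasDerivWithinAt_nonneg (convex_Ioi 0)
    (f' := fun r => (deriv Φ r * r ^ a - Φ r * (a * r ^ (a - 1))) / (r ^ a) ^ 2)
    (fun r hr => (hderiv r hr).continuousAt.continuousWithinAt) ?_ ?_
  · intro r hr
    rw [interior_Ioi, mem_Ioi] at hr
    exact (hderiv r hr).hasDerivWithinAt
  · intro r hr
    rw [interior_Ioi, mem_Ioi] at hr
    have hnum : deriv Φ r * r ^ a - Φ r * (a * r ^ (a - 1))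
        = r ^ (a - 1) * (r * deriv Φ r - a * Φ r) := by
      rw [Real.rpow_sub_one hr.ne']
      field_simp
    rw [hnum]
    have := hlow r hr
    have := Real.rpow_pos_of_pos hr (a - 1)
    positivity

theorem IsLowerType.of_monotoneOn_div_rpow {Φ : ℝ → ℝ} {a : ℝ}
    (hmono : MonotoneOn (fun r => Φ r / r ^ a) (Ioi 0)) : IsLowerType Φ a := by
  intro x hx l hl
  have hl0 : 0 < l := zero_lt_one.trans_le hl
  have hxa : 0 < x ^ a := Real.rpow_pos_of_pos hx a
  have h := hmono hx (mul_pos hl0 hx) (le_mul_of_one_le_left hx.le hl)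
  simp only at h
  rw [div_le_div_iff₀ hxa (Real.rpow_pos_of_pos (mul_pos hl0 hx) a),
    Real.mul_rpow hl0.le hx.le] at h
  refine le_of_mul_le_mul_right ?_ hxa
  linarith

theorem IsLowerType.isUpperType_inv {Φ Φinv : ℝ → ℝ} {a : ℝ} (hΦ : IsLowerType Φ a)
    (ha : 0 < a) (hmono : StrictMonoOn Φ (Ici 0)) (hright : ∀ t, 0 ≤ t → Φ (Φinv t) = t)
    (hinvpos : ∀ u, 0 < u → 0 < Φinv u) : IsUpperType Φinv (1 / a) := by
  intro u v hv hvu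
  have hu : 0 < u := hv.trans_le hvu
  have hl : 1 ≤ (u / v) ^ (1 / a) := Real.one_le_rpow ((one_le_div hv).2 hvu) (by positivity)
  have hla : ((u / v) ^ (1 / a)) ^ a = u / v := by
    rw [← Real.rpow_mul (by positivity), one_div_mul_cancel ha.ne', Real.rpow_one]
  have h := hΦ (Φinv v) (hinvpos v hv) _ hl
  rw [hla, hright v hv.le, div_mul_cancel₀ _ hv.ne'] at h
  have hpos : 0 ≤ (u / v) ^ (1 / a) * Φinv v := by
    have := hinvpos v hv
    positivity
  exact (hmono.le_iff_le (hinvpos u hu).le hpos).1 ((hright u hu.le).trans_le h)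

theorem intervalIntegral_le_of_le_mul_rpow_neg {f : ℝ → ℝ} {K p t : ℝ} (ht : 0 ≤ t)
    (hp : p < 1)
    (hf : IntervalIntegrable f MeasureTheory.volume 0 t)
    (hle : ∀ s ∈ Ioc 0 t, f s ≤ K * s ^ (-p)) :
    ∫ s in (0 : ℝ)..t, f s ≤ K * (t ^ (1 - p) / (1 - p)) := by
  have hp' : -1 < -p := by linarith
  have hint : IntervalIntegrable (fun s => K * s ^ (-p)) MeasureTheory.volume 0 t :=
    (intervalIntegral.intervalIntegrable_rpow' hp').const_mul K
  calc ∫ s in (0 : ℝ)..t, f s ≤ ∫ s in (0 : ℝ)..t, K * s ^ (-p) :=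
        intervalIntegral.integral_mono_on_of_le_Ioo ht hf hint fun s hs =>
          hle s (Ioo_subset_Ioc_self hs)
    _ = K * (t ^ (1 - p) / (1 - p)) := by
        rw [intervalIntegral.integral_const_mul, integral_rpow (Or.inl hp'),
          Real.zero_rpow (by linarith), neg_add_eq_sub]
        ring

theorem IsUpperType.mul_average_le {ψ μ : ℝ → ℝ} {p M t : ℝ} (hψ : IsUpperType ψ p)
    (hp : p < 1) (hψpos : ∀ u, 0 < u → 0 < ψ u) (hM : 0 ≤ M)
    (hμ : ∀ s, 0 < s → 1 / ψ (1 / s) * μ s ≤ M) (ht : 0 < t)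
    (hμint : IntervalIntegrable μ MeasureTheory.volume 0 t) :
    1 / ψ (1 / t) * (1 / t * ∫ s in (0 : ℝ)..t, μ s) ≤ (1 - p)⁻¹ * M := by
  have hψt := hψpos (1 / t) (by positivity)
  have hbound : ∀ s ∈ Ioc 0 t, μ s ≤ M * t ^ p * ψ (1 / t) * s ^ (-p) := by
    rintro s ⟨hs, hst⟩
    have hμs : μ s ≤ M * ψ (1 / s) := by
      have := hμ s hs
      rwa [one_div_mul_eq_div, div_le_iff₀ (hψpos _ (by positivity))] at this
    have hψs : ψ (1 / s) ≤ (t / s) ^ p * ψ (1 / t) := by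
      have := hψ (1 / s) (1 / t) (by positivity) (one_div_le_one_div_of_le hs hst)
      rwa [show 1 / s / (1 / t) = t / s by field_simp] at this
    calc μ s ≤ M * ψ (1 / s) := hμs
      _ ≤ M * ((t / s) ^ p * ψ (1 / t)) := mul_le_mul_of_nonneg_left hψs hM
      _ = M * t ^ p * ψ (1 / t) * s ^ (-p) := by
        rw [Real.div_rpow ht.le hs.le, Real.rpow_neg hs.le]
        ring
  have htp : t ^ p * t ^ (1 - p) = t := by
    rw [← Real.rpow_add ht, add_sub_cancel, Real.rpow_one]
  have hp' : 0 < 1 - p := by linarith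
  calc 1 / ψ (1 / t) * (1 / t * ∫ s in (0 : ℝ)..t, μ s)
      ≤ 1 / ψ (1 / t) * (1 / t * (M * t ^ p * ψ (1 / t) * (t ^ (1 - p) / (1 - p)))) := by
        gcongr
        exact intervalIntegral_le_of_le_mul_rpow_neg ht.le hp hμint hbound
    _ = (1 - p)⁻¹ * M * (t ^ p * t ^ (1 - p) / t) := by
        field_simp
    _ = (1 - p)⁻¹ * M := by
        rw [htp, div_self ht.ne', mul_one]

theorem ENNReal.iSup_ofReal_le_ofReal_mul_iSup_ofReal {ι : Sort*} {f g : ι → ℝ} {C : ℝ}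
    (hC : 0 < C) (h : ∀ M, 0 ≤ M → (∀ i, g i ≤ M) → ∀ i, f i ≤ C * M) :
    ⨆ i, ENNReal.ofReal (f i) ≤ ENNReal.ofReal C * ⨆ i, ENNReal.ofReal (g i) := by
  set T := ⨆ i, ENNReal.ofReal (g i)
  rcases eq_or_ne T ⊤ with hT | hT
  · rw [hT, ENNReal.mul_top (ENNReal.ofReal_pos.2 hC).ne']
    exact le_top
  have hg : ∀ i, g i ≤ T.toReal := fun i =>
    (ENNReal.ofReal_le_iff_le_toReal hT).1 (le_iSup (fun i => ENNReal.ofReal (g i)) i)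
  refine iSup_le fun i => ?_
  calc ENNReal.ofReal (f i) ≤ ENNReal.ofReal (C * T.toReal) :=
        ENNReal.ofReal_le_ofReal (h _ ENNReal.toReal_nonneg hg i)
    _ = ENNReal.ofReal C * T := by
        rw [ENNReal.ofReal_mul hC.le, ENNReal.ofReal_toReal hT]

theorem stmt_16_general (Φ Φinv : ℝ → ℝ)
    (hmono : StrictMonoOn Φ (Set.Ici 0))
    (hinvmaps : Set.MapsTo Φinv (Set.Ici 0) (Set.Ici 0))
    (hright : ∀ t : ℝ, 0 ≤ t → Φ (Φinv t) = t)
    (hpos : ∀ t : ℝ, 0 < t → 0 < Φ t)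
    (hdiff : ∀ t : ℝ, 0 < t → DifferentiableAt ℝ Φ t)
    (ha : 1 < sInf {x : ℝ | ∃ t : ℝ, 0 < t ∧ x = t * deriv Φ t / Φ t}) :
    ∃ C' : ℝ, 0 < C' ∧ ∀ μ : ℝ → ℝ,
      (∀ s : ℝ, 0 < s → 0 ≤ μ s) →
      AntitoneOn μ (Set.Ioi 0) →
      (∀ t : ℝ, 0 < t → IntervalIntegrable μ MeasureTheory.volume 0 t) →
      (⨆ t : {t : ℝ // 0 < t},
          ENNReal.ofReal ((1 / Φinv (1 / (t : ℝ))) *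
            ((1 / (t : ℝ)) * ∫ s in (0:ℝ)..(t : ℝ), μ s)))
        ≤ ENNReal.ofReal C' *
          ⨆ t : {t : ℝ // 0 < t},
            ENNReal.ofReal ((1 / Φinv (1 / (t : ℝ))) * μ (t : ℝ)) := by
  set a := sInf {x : ℝ | ∃ t : ℝ, 0 < t ∧ x = t * deriv Φ t / Φ t}
  have ha0 : 0 < a := one_pos.trans ha
  have hlow : ∀ r, 0 < r → a * Φ r ≤ r * deriv Φ r := by
    intro r hr
    have hbdd : BddBelow {x : ℝ | ∃ t : ℝ, 0 < t ∧ x = t * deriv Φ t / Φ t} := by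
      by_contra h
      simp only [a, Real.sInf_of_not_bddBelow h] at ha0
      exact lt_irrefl 0 ha0
    exact (le_div_iff₀ (hpos r hr)).1 (csInf_le hbdd ⟨r, hr, rfl⟩)
  have hinvpos : ∀ u, 0 < u → 0 < Φinv u := by
    intro u hu
    refine (hinvmaps hu.le).lt_of_ne' fun h0 => ?_
    have h1 : Φ 0 ≤ Φ (Φinv 0) :=
      hmono.monotoneOn self_mem_Ici (hinvmaps self_mem_Ici) (hinvmaps self_mem_Ici)
    have h2 : Φ 0 = u := by rw [← h0, hright u hu.le]
    rw [hright 0 le_rfl, h2] at h1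
    exact hu.not_ge h1
  have hp : 1 / a < 1 := (div_lt_one ha0).2 ha
  have hupper : IsUpperType Φinv (1 / a) :=
    (IsLowerType.of_monotoneOn_div_rpow
      (monotoneOn_div_rpow_of_mul_le_mul_deriv hdiff hlow)).isUpperType_inv ha0 hmono hright hinvpos
  refine ⟨(1 - 1 / a)⁻¹, inv_pos.2 (sub_pos.2 hp), fun μ _ _ hμint => ?_⟩
  exact ENNReal.iSup_ofReal_le_ofReal_mul_iSup_ofReal (inv_pos.2 (sub_pos.2 hp))
    fun M hM hμM t =>
      hupper.mul_average_le hp hinvpos hM (fun s hs => hμM ⟨s, hs⟩) t.2 (hμint t t.2)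

/-- Let `Φ` be a strictly increasing growth function (continuous,
mapping `[0,∞)` onto itself, with inverse `Φinv`), positive and differentiable on
`(0,∞)`, with `1 < a_Φ ≤ b_Φ < ∞`.  Then there is `C' > 0` such that for every
nonincreasing locally integrable `μ : (0,∞) → [0,∞)`,
`sup_{t>0} φ_Φ(t)·(1/t)·∫₀ᵗ μ ≤ C' · sup_{t>0} φ_Φ(t)·μ(t)` (suprema in `[0,∞]`),
where `φ_Φ(t) = 1/Φ⁻¹(1/t)`. -/
theorem stmt_16 (Φ Φinv : ℝ → ℝ)
    (hcont : ContinuousOn Φ (Set.Ici 0))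
    (hmono : StrictMonoOn Φ (Set.Ici 0))
    (hmaps : Set.MapsTo Φ (Set.Ici 0) (Set.Ici 0))
    (hinvmaps : Set.MapsTo Φinv (Set.Ici 0) (Set.Ici 0))
    (hleft : ∀ t : ℝ, 0 ≤ t → Φinv (Φ t) = t)
    (hright : ∀ t : ℝ, 0 ≤ t → Φ (Φinv t) = t)
    (hpos : ∀ t : ℝ, 0 < t → 0 < Φ t)
    (hdiff : ∀ t : ℝ, 0 < t → DifferentiableAt ℝ Φ t)
    (ha : 1 < sInf {x : ℝ | ∃ t : ℝ, 0 < t ∧ x = t * deriv Φ t / Φ t})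
    (hb : BddAbove {x : ℝ | ∃ t : ℝ, 0 < t ∧ x = t * deriv Φ t / Φ t}) :
    ∃ C' : ℝ, 0 < C' ∧ ∀ μ : ℝ → ℝ,
      (∀ s : ℝ, 0 < s → 0 ≤ μ s) →
      AntitoneOn μ (Set.Ioi 0) →
      (∀ t : ℝ, 0 < t → IntervalIntegrable μ MeasureTheory.volume 0 t) →
      (⨆ t : {t : ℝ // 0 < t},
          ENNReal.ofReal ((1 / Φinv (1 / (t : ℝ))) *
            ((1 / (t : ℝ)) * ∫ s in (0:ℝ)..(t : ℝ), μ s)))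
        ≤ ENNReal.ofReal C' *
          ⨆ t : {t : ℝ // 0 < t},
            ENNReal.ofReal ((1 / Φinv (1 / (t : ℝ))) * μ (t : ℝ)) :=
  stmt_16_general Φ Φinv hmono hinvmaps hright hpos hdiff ha
end
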